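/- Let d = 2^n for a non-negative integer n, let ζ_k = 2 cos(π(2k−1)/(2d)) for k = 1, …, d, and let T be the d × d Vandermonde matrix with (i,j)-entry ζ_i^{j−1}. Then the Chebyshev-Frolov lattice T(ℤ^d) is admissible: there exists δ > 0 such that ∏_{i=1}^{d} |(T k)_i| ≥ δ for every nonzero k ∈ ℤ^d. -/

import Mathlib

/-!
The points `ζ_k` are the roots of the rescaled Chebyshev polynomial `C_d` (`C_d(2 cos θ) =
2 cos(d θ)`), a monic integer polynomial. For `d = 2^n` it is Eisenstein at `2`: it reduces to
`X^d` modulo `2` and `C_d(0) = ±2`; hence it is irreducible. A nonzero `k ∈ ℤ^d` gives the integer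
polynomial `f = ∑ k_j X^j` of degree `< d` with `(T k)_i = f(ζ_i)`, so `∏ (T k)_i` is the resultant
of `C_d` and `f`, an integer. It is nonzero since no root of the irreducible `C_d` is a root of a
nonzero polynomial of smaller degree. So `δ = 1` works.
-/

/-- The Vandermonde matrix of the points `ζ_k = 2 cos(π(2k−1)/(2d))`, `k = 1, …, d`. -/
noncomputable def chebVandermonde (d : ℕ) : Matrix (Fin d) (Fin d) ℝ :=
  Matrix.of fun i j =>
    (2 * Real.cos (Real.pi * (2 * ((i : ℕ) + 1 : ℝ) - 1) / (2 * (d : ℝ)))) ^ (j : ℕ)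

open Polynomial Real

namespace Polynomial

theorem Monic.prod_roots_aeval_eq_algebraMap_resultant {R K : Type*} [CommRing R] [CommRing K]
    [IsDomain K] [Algebra R K] {p : R[X]} (hp : p.Monic) (hs : (p.map (algebraMap R K)).Splits)
    (f : R[X]) :
    ((p.map (algebraMap R K)).roots.map fun x ↦ aeval x f).prod =
      algebraMap R K (resultant p f) := by
  have h := resultant_eq_prod_eval (p.map (algebraMap R K)) (f.map (algebraMap R K)) f.natDegree
    natDegree_map_le hs
  rw [resultant_map_map, hp.natDegree_map, (hp.map _).leadingCoeff, one_pow, one_mul] at h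
  simpa [eval_map_algebraMap] using h.symm

theorem aeval_ne_zero_of_natDegree_lt {R S : Type*} [CommRing R] [IsDomain R]
    [IsIntegrallyClosed R] [CommRing S] [IsDomain S] [Algebra R S] [Module.IsTorsionFree R S]
    {p f : R[X]} (hirr : Irreducible p) (hp : p.Monic) {x : S} (hx : aeval x p = 0) (hf : f ≠ 0)
    (hdeg : f.natDegree < p.natDegree) : aeval x f ≠ 0 := by
  intro hfx
  have hint : IsIntegral R x := ⟨p, hp, hx⟩
  have hminpoly : minpoly R x = p := eq_of_monic_of_associated (minpoly.monic hint) hp <|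
    (minpoly.irreducible hint).associated_of_dvd hirr (minpoly.isIntegrallyClosed_dvd hint hx)
  have hle := natDegree_le_of_dvd (minpoly.isIntegrallyClosed_dvd hint hfx) hf
  rw [hminpoly] at hle
  omega

theorem one_le_abs_prod_roots_aeval {K : Type*} [Field K] [LinearOrder K] [IsStrictOrderedRing K]
    {p f : ℤ[X]} (hirr : Irreducible p) (hp : p.Monic) (hs : (p.map (algebraMap ℤ K)).Splits)
    (hf : f ≠ 0) (hdeg : f.natDegree < p.natDegree) :
    1 ≤ |((p.map (algebraMap ℤ K)).roots.map fun x ↦ aeval x f).prod| := by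
  have hprod : ((p.map (algebraMap ℤ K)).roots.map fun x ↦ aeval x f).prod ≠ 0 := by
    refine Multiset.prod_ne_zero fun h0 ↦ ?_
    obtain ⟨x, hx, hfx⟩ := Multiset.mem_map.mp h0
    rw [mem_roots (hp.map _).ne_zero, IsRoot.def, eval_map_algebraMap] at hx
    exact aeval_ne_zero_of_natDegree_lt hirr hp hx hf hdeg hfx
  rw [hp.prod_roots_aeval_eq_algebraMap_resultant hs, eq_intCast] at hprod ⊢
  exact_mod_cast Int.one_le_abs (by exact_mod_cast hprod)

theorem natDegree_two_mul_X (R : Type*) [Semiring R] [NeZero (2 : R)] :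
    (2 * X : R[X]).natDegree = 1 := by
  rw [← C_ofNat, natDegree_C_mul_X _ (NeZero.ne 2)]

theorem aeval_ofFn {R A : Type*} [CommSemiring R] [DecidableEq R] [Semiring A] [Algebra R A]
    {n : ℕ} (v : Fin n → R) (x : A) : aeval x (ofFn n v) = ∑ i, v i • x ^ (i : ℕ) := by
  simp [ofFn_eq_sum_monomial, aeval_monomial, Algebra.smul_def]

end Polynomial

namespace Polynomial.Chebyshev

section IsDomain

variable (R : Type*) [CommRing R] [IsDomain R] [NeZero (2 : R)]

theorem natDegree_C (n : ℤ) : (C R n).natDegree = n.natAbs := by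
  have h := congrArg natDegree (C_comp_two_mul_X R n)
  rwa [natDegree_comp, natDegree_two_mul_X, mul_one, ← Polynomial.C_ofNat,
    natDegree_C_mul (NeZero.ne 2), natDegree_T] at h

theorem monic_C {n : ℤ} (hn : n ≠ 0) : (C R n).Monic := by
  have h := congrArg leadingCoeff (C_comp_two_mul_X R n)
  rw [leadingCoeff_comp (by simp [natDegree_two_mul_X]), leadingCoeff_mul, leadingCoeff_mul,
    leadingCoeff_X, ← Polynomial.C_ofNat, leadingCoeff_C, mul_one, natDegree_C, leadingCoeff_T,
    ← pow_succ', Nat.sub_add_cancel (Int.natAbs_pos.mpr hn)] at h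
  exact (mul_eq_right₀ (pow_ne_zero _ (NeZero.ne 2))).mp h

end IsDomain

theorem C_prime_pow_of_charP (R : Type*) [CommRing R] (p : ℕ) [Fact p.Prime] [CharP R p]
    (n : ℕ) : C R (p ^ n) = X ^ p ^ n := by
  induction n with
  | zero => simp
  | succ n ih =>
    rw [pow_succ', C_mul, ih, ← dickson_one_one_eq_chebyshev_C, dickson_one_one_charP, X_pow_comp,
      ← pow_mul, ← pow_succ]

theorem C_eval_zero_of_even (R : Type*) [CommRing R] {n : ℤ} (hn : Even n) :
    (C R n).eval 0 = 2 * (n / 2).negOnePow := by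
  have h := congrArg (eval 0) (C_comp_two_mul_X R n)
  rwa [eval_comp, eval_mul, eval_X, mul_zero, eval_mul, T_eval_zero_of_even R hn, eval_ofNat] at h

theorem roots_C_real (n : ℕ) :
    (C ℝ n).roots = (Multiset.range n).map fun k : ℕ ↦ 2 * cos ((2 * k + 1) * π / (2 * n)) := by
  rcases eq_or_ne n 0 with rfl | hn
  · simp [← Polynomial.C_ofNat]
  have hnodup : ((Multiset.range n).map fun k : ℕ ↦ 2 * cos ((2 * k + 1) * π / (2 * n))).Nodup := by
    have := (roots_T_real_nodup n).map (mul_right_injective₀ (two_ne_zero' ℝ))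
    rwa [Multiset.map_map] at this
  have hC : C ℝ n ≠ 0 := (monic_C ℝ (Int.natCast_ne_zero.mpr hn)).ne_zero
  refine (Multiset.eq_of_le_of_card_le ((Multiset.le_iff_subset hnodup).mpr fun x hx ↦ ?_) ?_).symm
  · obtain ⟨k, -, rfl⟩ := Multiset.mem_map.mp hx
    rw [mem_roots hC, IsRoot.def, C_two_mul_real_cos, mul_eq_zero, cos_eq_zero_iff]
    refine .inr ⟨k, ?_⟩
    field_simp
    push_cast
    ring
  · rw [Multiset.card_map, Multiset.card_range]
    exact (card_roots' _).trans (natDegree_C ℝ n).le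

theorem splits_C_real (n : ℕ) : (C ℝ n).Splits := by
  rw [splits_iff_card_roots, roots_C_real, Multiset.card_map, Multiset.card_range, natDegree_C,
    Int.natAbs_natCast]

theorem isEisensteinAt_C_two_pow {n : ℕ} (hn : n ≠ 0) :
    (C ℤ (2 ^ n)).IsEisensteinAt (Ideal.span {2}) := by
  refine (monic_C ℤ (pow_ne_zero _ two_ne_zero)).isEisensteinAt_of_mem_of_notMem ?_
    (fun {k} hk ↦ ?_) ?_
  · rw [Ne, Ideal.span_singleton_eq_top]
    decide
  · have hk : k ≠ 2 ^ n := by simpa [natDegree_C] using hk.ne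
    have hmod2 : ((C ℤ (2 ^ n)).coeff k : ZMod 2) = 0 := by
      rw [← eq_intCast (Int.castRingHom _), ← coeff_map, map_C,
        show ((2 : ℤ) ^ n) = ((2 : ℕ) : ℤ) ^ n by norm_num, C_prime_pow_of_charP (ZMod 2) 2 n,
        coeff_X_pow, if_neg hk]
    exact Ideal.mem_span_singleton.mpr ((ZMod.intCast_zmod_eq_zero_iff_dvd _ 2).mp hmod2)
  · rw [Ideal.span_singleton_pow, Ideal.mem_span_singleton, coeff_zero_eq_eval_zero,
      C_eval_zero_of_even ℤ (even_two.pow_of_ne_zero hn)]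
    rcases Int.units_eq_one_or ((2 ^ n : ℤ) / 2).negOnePow with h | h <;> rw [h] <;> decide

theorem irreducible_C_two_pow (n : ℕ) : Irreducible (C ℤ (2 ^ n)) := by
  rcases eq_or_ne n 0 with rfl | hn
  · simpa using irreducible_X
  refine (isEisensteinAt_C_two_pow hn).irreducible
    ((Ideal.span_singleton_prime two_ne_zero).mpr Int.prime_two)
    (monic_C ℤ (pow_ne_zero _ two_ne_zero)).isPrimitive ?_
  rw [natDegree_C, Int.natAbs_pow]
  positivity

end Polynomial.Chebyshev

theorem chebVandermonde_mulVec_apply (d : ℕ) (v : Fin d → ℤ) (i : Fin d) :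
    (chebVandermonde d).mulVec (fun j ↦ (v j : ℝ)) i =
      aeval (2 * cos ((2 * i + 1) * π / (2 * d))) (ofFn d v) := by
  rw [aeval_ofFn, Matrix.mulVec, dotProduct]
  refine Finset.sum_congr rfl fun j _ ↦ ?_
  rw [chebVandermonde, Matrix.of_apply, zsmul_eq_mul, mul_comm]
  congr 4
  ring

theorem chebyshevFrolov_admissible (n : ℕ) :
    ∃ δ > 0, ∀ k : Fin (2 ^ n) → ℤ, k ≠ 0 →
      δ ≤ ∏ i, |(chebVandermonde (2 ^ n)).mulVec (fun j => (k j : ℝ)) i| := by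
  refine ⟨1, one_pos, fun k hk ↦ ?_⟩
  set p := Chebyshev.C ℤ (2 ^ n)
  have hd : ((2 ^ n : ℕ) : ℤ) = 2 ^ n := by norm_num
  have hf : ofFn (2 ^ n) k ≠ 0 := by rwa [← map_zero (ofFn (2 ^ n)), (injective_ofFn _).ne_iff]
  have hdeg : (ofFn (2 ^ n) k).natDegree < p.natDegree := by
    rw [Chebyshev.natDegree_C, Int.natAbs_pow]
    exact ofFn_natDegree_lt Nat.one_le_two_pow k
  have hroots : (p.map (algebraMap ℤ ℝ)).roots =
      (Multiset.range (2 ^ n)).map fun j : ℕ ↦ 2 * cos ((2 * j + 1) * π / (2 * (2 ^ n : ℕ))) := by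
    rw [Chebyshev.map_C, ← hd, Chebyshev.roots_C_real]
  have hs : (p.map (algebraMap ℤ ℝ)).Splits := by
    rw [Chebyshev.map_C, ← hd]
    exact Chebyshev.splits_C_real _
  calc (1 : ℝ)
      ≤ |((p.map (algebraMap ℤ ℝ)).roots.map fun x ↦ aeval x (ofFn (2 ^ n) k)).prod| :=
        one_le_abs_prod_roots_aeval (Chebyshev.irreducible_C_two_pow n)
          (Chebyshev.monic_C ℤ (pow_ne_zero _ two_ne_zero)) hs hf hdeg
    _ = ∏ i, |(chebVandermonde (2 ^ n)).mulVec (fun j => (k j : ℝ)) i| := by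
        rw [hroots, Multiset.map_map, ← Finset.range_val, ← Finset.prod_eq_multiset_prod,
          Finset.abs_prod, ← Fin.prod_univ_eq_prod_range]
        simp only [chebVandermonde_mulVec_apply, Function.comp_apply]
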